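/- Let $0<p<q<1$, $\rho=\frac{p(1-q)}{q(1-p)}$, and let $f:\{0,1\}^n\to\{0,1\}$ be monotone. Then $\mu_q(f)\ge\mu_p(f)^2/\mathrm{Stab}_\rho(f)$, where $\mathrm{Stab}_\rho(f)=\langle f,\mathrm{T}_\rho f\rangle_{\mu_p}$ is the $p$-biased noise stability. -/

import Mathlib

open Finset

/-- Weight of a point of the `p`-biased cube. -/
noncomputable def cubeWt {n : ℕ} (p : ℝ) (x : Fin n → Bool) : ℝ :=
  ∏ i, if x i then p else 1 - p

/-- Expectation with respect to the `p`-biased measure on `{0,1}ⁿ`. -/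
noncomputable def cubeE {n : ℕ} (p : ℝ) (f : (Fin n → Bool) → ℝ) : ℝ :=
  ∑ x : Fin n → Bool, cubeWt p x * f x

/-- The conditional law of `x` given `y` under the monotone coupling `D(p,q)`:
`downK p q a b = ℙ(x = a ∣ y = b)`. -/
noncomputable def downK (p q : ℝ) : Bool → Bool → ℝ
  | true, true => p / q
  | false, true => 1 - p / q
  | true, false => 0
  | false, false => 1

/-- The conditional law of `y` given `x` under the monotone coupling `D(p,q)`:
`upK p q b a = ℙ(y = b ∣ x = a)`. -/
noncomputable def upK (p q : ℝ) : Bool → Bool → ℝ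
  | true, true => 1
  | false, true => 0
  | true, false => (q - p) / (1 - p)
  | false, false => (1 - q) / (1 - p)

/-- The directed operator `T^{p→q} : L²(μ_p) → L²(μ_q)`,
`(T^{p→q} f)(y) = E[f(x) ∣ y]` for `(x,y) ∼ D(p,q)`. -/
noncomputable def Tpq {n : ℕ} (p q : ℝ) (f : (Fin n → Bool) → ℝ) :
    (Fin n → Bool) → ℝ :=
  fun y => ∑ x : Fin n → Bool, (∏ i, downK p q (x i) (y i)) * f x

/-- The adjoint directed operator `T^{q→p} = (T^{p→q})⋆`,
`(T^{q→p} g)(x) = E[g(y) ∣ x]` for `(x,y) ∼ D(p,q)`. -/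
noncomputable def Tqp {n : ℕ} (p q : ℝ) (g : (Fin n → Bool) → ℝ) :
    (Fin n → Bool) → ℝ :=
  fun x => ∑ y : Fin n → Bool, (∏ i, upK p q (y i) (x i)) * g y

/-- The one-bit kernel of the `p`-biased noise operator `T_ρ`:
`noiseK ρ p b a = ℙ(y = b ∣ x = a)` where `y = x` with probability `ρ` and
otherwise `y` is resampled `p`-biased. -/
noncomputable def noiseK (ρ p : ℝ) : Bool → Bool → ℝ :=
  fun b a => ρ * (if b = a then 1 else 0) + (1 - ρ) * (if b then p else 1 - p)

/-- The `p`-biased noise operator `T_ρ`. -/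
noncomputable def Tnoise {n : ℕ} (ρ p : ℝ) (f : (Fin n → Bool) → ℝ) :
    (Fin n → Bool) → ℝ :=
  fun x => ∑ y : Fin n → Bool, (∏ i, noiseK ρ p (y i) (x i)) * f y

/-!
Couple `x ∼ μ_p` and `y ∼ μ_q` monotonically, so that `x ≤ y` coordinatewise, and let
`T^{p→q} f (y) = E[f(x) ∣ y]`. Since `f` is monotone and Boolean, `f(x) = 1` forces `f(y) = 1`,
hence `⟨T^{p→q} f, f⟩_{μ_q} = μ_p(f)`. Bitwise, composing the conditional laws of the coupling
gives `(T^{p→q})⋆ T^{p→q} = T_ρ`, so `‖T^{p→q} f‖²_{μ_q} = Stab_ρ(f)`, and Cauchy–Schwarz in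
`L²(μ_q)` yields `μ_p(f)² ≤ Stab_ρ(f) μ_q(f)`.
-/

section Coupling

variable {p q : ℝ} {n : ℕ}

lemma cubeWt_nonneg (hp0 : 0 ≤ p) (hp1 : p ≤ 1) (x : Fin n → Bool) : 0 ≤ cubeWt p x :=
  prod_nonneg fun i _ => by cases x i <;> simp <;> linarith

lemma cubeE_nonneg (hp0 : 0 ≤ p) (hp1 : p ≤ 1) {f : (Fin n → Bool) → ℝ} (hf : ∀ x, 0 ≤ f x) :
    0 ≤ cubeE p f :=
  sum_nonneg fun x _ => mul_nonneg (cubeWt_nonneg hp0 hp1 x) (hf x)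

lemma sq_cubeE_mul_le (hp0 : 0 ≤ p) (hp1 : p ≤ 1) (g h : (Fin n → Bool) → ℝ) :
    cubeE p (fun x => g x * h x) ^ 2 ≤
      cubeE p (fun x => g x ^ 2) * cubeE p (fun x => h x ^ 2) :=
  sum_sq_le_sum_mul_sum_of_sq_le_mul _
    (fun x _ => mul_nonneg (cubeWt_nonneg hp0 hp1 x) (sq_nonneg _))
    (fun x _ => mul_nonneg (cubeWt_nonneg hp0 hp1 x) (sq_nonneg _))
    (fun x _ => le_of_eq (by ring))

lemma bitWt_mul_downK (hq : q ≠ 0) (hp : p ≠ 1) (a b : Bool) :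
    (if b then q else 1 - q) * downK p q a b = (if a then p else 1 - p) * upK p q b a := by
  have hp' : 1 - p ≠ 0 := sub_ne_zero.mpr hp.symm
  cases a <;> cases b <;> simp [downK, upK] <;> field_simp

lemma sum_upK (hp : p ≠ 1) (a : Bool) : ∑ b, upK p q b a = 1 := by
  have hp' : 1 - p ≠ 0 := sub_ne_zero.mpr hp.symm
  cases a <;> simp [upK]
  field_simp
  ring

lemma sum_upK_mul_downK (hq : q ≠ 0) (hp : p ≠ 1) (a a' : Bool) :
    ∑ b, upK p q b a * downK p q a' b = noiseK (p * (1 - q) / (q * (1 - p))) p a' a := by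
  have hp' : 1 - p ≠ 0 := sub_ne_zero.mpr hp.symm
  cases a <;> cases a' <;> simp [upK, downK, noiseK] <;> field_simp <;> ring

lemma cubeWt_mul_prod_downK (hq : q ≠ 0) (hp : p ≠ 1) (x y : Fin n → Bool) :
    cubeWt q y * ∏ i, downK p q (x i) (y i) = cubeWt p x * ∏ i, upK p q (y i) (x i) := by
  simp only [cubeWt, ← prod_mul_distrib]
  exact prod_congr rfl fun i _ => bitWt_mul_downK hq hp (x i) (y i)

lemma sum_prod_upK (hp : p ≠ 1) (x : Fin n → Bool) :
    ∑ y : Fin n → Bool, ∏ i, upK p q (y i) (x i) = 1 := by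
  rw [← Fintype.prod_sum fun i b => upK p q b (x i)]
  exact prod_eq_one fun i _ => sum_upK hp (x i)

lemma sum_prod_upK_mul_prod_downK (hq : q ≠ 0) (hp : p ≠ 1) (x x' : Fin n → Bool) :
    ∑ y : Fin n → Bool, (∏ i, upK p q (y i) (x i)) * ∏ i, downK p q (x' i) (y i) =
      ∏ i, noiseK (p * (1 - q) / (q * (1 - p))) p (x' i) (x i) := by
  simp only [← prod_mul_distrib]
  rw [← Fintype.prod_sum fun i b => upK p q b (x i) * downK p q (x' i) b]
  exact prod_congr rfl fun i _ => sum_upK_mul_downK hq hp (x i) (x' i)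

lemma le_of_prod_upK_ne_zero {x y : Fin n → Bool} (h : ∏ i, upK p q (y i) (x i) ≠ 0) (i : Fin n)
    (hx : x i = true) : y i = true := by
  by_contra hy
  refine h (prod_eq_zero (mem_univ i) ?_)
  rw [hx, Bool.eq_false_iff.mpr hy]
  rfl

theorem cubeE_Tpq_mul (hq : q ≠ 0) (hp : p ≠ 1) (f g : (Fin n → Bool) → ℝ) :
    cubeE q (fun y => Tpq p q f y * g y) = cubeE p (fun x => f x * Tqp p q g x) := by
  simp only [cubeE, Tpq, Tqp, sum_mul, mul_sum]
  rw [sum_comm]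
  refine sum_congr rfl fun x _ => sum_congr rfl fun y _ => ?_
  linear_combination (f x * g y) * cubeWt_mul_prod_downK hq hp x y

theorem Tqp_Tpq (hq : q ≠ 0) (hp : p ≠ 1) (f : (Fin n → Bool) → ℝ) :
    Tqp p q (Tpq p q f) = Tnoise (p * (1 - q) / (q * (1 - p))) p f := by
  funext x
  simp only [Tqp, Tpq, Tnoise, mul_sum]
  rw [sum_comm]
  refine sum_congr rfl fun x' _ => ?_
  rw [← sum_prod_upK_mul_prod_downK hq hp x x', sum_mul]
  exact sum_congr rfl fun y _ => by ring

/-- Every `y` reachable from `x` under the monotone coupling lies above `x`, where a monotone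
indicator is still `1`. -/
lemma mul_Tqp_self_of_monotone (hp : p ≠ 1) {f : (Fin n → Bool) → ℝ}
    (hBool : ∀ x, f x = 0 ∨ f x = 1)
    (hmono : ∀ x y : Fin n → Bool, (∀ i, x i = true → y i = true) → f x ≤ f y)
    (x : Fin n → Bool) : f x * Tqp p q f x = f x := by
  rcases hBool x with hx | hx
  · rw [hx, zero_mul]
  have hfy : ∀ y, (∏ i, upK p q (y i) (x i)) * f y = ∏ i, upK p q (y i) (x i) := by
    intro y
    by_cases h : ∏ i, upK p q (y i) (x i) = 0
    · rw [h, zero_mul]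
    · have := hmono x y (le_of_prod_upK_ne_zero h)
      rcases hBool y with hy | hy <;> rw [hy] at this ⊢ <;> linarith
  rw [hx, one_mul, Tqp]
  simp only [hfy, sum_prod_upK hp]

end Coupling

theorem stmt14 {n : ℕ} (p q : ℝ) (hp0 : 0 < p) (hpq : p < q) (hq1 : q < 1)
    (f : (Fin n → Bool) → ℝ) (hBool : ∀ x, f x = 0 ∨ f x = 1)
    (hmono : ∀ x y : Fin n → Bool, (∀ i, x i = true → y i = true) → f x ≤ f y) :
    (cubeE p f) ^ 2 /
        cubeE p (fun x => f x * Tnoise (p * (1 - q) / (q * (1 - p))) p f x) ≤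
      cubeE q f := by
  have hq0 : 0 < q := hp0.trans hpq
  have hp1 : p ≠ 1 := (hpq.trans hq1).ne
  have hf_sq : (fun x => f x ^ 2) = f :=
    funext fun x => by rcases hBool x with h | h <;> simp [h]
  have hcorr : cubeE q (fun y => Tpq p q f y * f y) = cubeE p f := by
    rw [cubeE_Tpq_mul hq0.ne' hp1]
    simp only [mul_Tqp_self_of_monotone hp1 hBool hmono]
  have hnorm : cubeE q (fun y => Tpq p q f y ^ 2) =
      cubeE p (fun x => f x * Tnoise (p * (1 - q) / (q * (1 - p))) p f x) := by
    rw [← Tqp_Tpq hq0.ne' hp1, ← cubeE_Tpq_mul hq0.ne' hp1]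
    simp only [sq]
  have hCS := sq_cubeE_mul_le hq0.le hq1.le (Tpq p q f) f
  rw [hcorr, hnorm, hf_sq] at hCS
  refine div_le_of_le_mul₀ ?_ ?_ (by linarith)
  · rw [← hnorm]
    exact cubeE_nonneg hq0.le hq1.le fun y => sq_nonneg _
  · exact cubeE_nonneg hq0.le hq1.le fun y => by rcases hBool y with h | h <;> simp [h]
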